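/- Let G : ℝ → ℝ be C² with G' ≥ 0 on ℝ, let Φ(y,t) = (y, t + (y²/2)G(t)) (a C¹ diffeomorphism of ℝ²), and let Ψ = (Ψ₁, Ψ₂) : ℝ² → ℝ² be its inverse. Define φ : ℝ² → ℝ by φ(u,v) = u·G(Ψ₂(u,v)). Then at every point (u,v) ∈ ℝ²: (i) ∂φ/∂u + φ·∂φ/∂v = G(Ψ₂(u,v)), and (ii) the twice-iterated Burgers operator vanishes: ∂/∂u(∂φ/∂u + φ·∂φ/∂v) + φ·∂/∂v(∂φ/∂u + φ·∂φ/∂v) = 0. -/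

import Mathlib

/-- The map `Φ(y,t) = (y, t + (y²/2)G(t))`. -/
noncomputable def PhiMap (G : ℝ → ℝ) (p : ℝ × ℝ) : ℝ × ℝ :=
  (p.1, p.2 + p.1 ^ 2 / 2 * G p.2)

/-- The intrinsic graphing function `φ(u,v) = u·G(Ψ₂(u,v))`. -/
noncomputable def phiMap (G : ℝ → ℝ) (Ψ : ℝ × ℝ → ℝ × ℝ) (u v : ℝ) : ℝ :=
  u * G ((Ψ (u, v)).2)

/-- The Burgers operator applied to `φ`: `B_φ(φ) = φ_u + φ·φ_v`. -/
noncomputable def burgers (G : ℝ → ℝ) (Ψ : ℝ × ℝ → ℝ × ℝ) (u v : ℝ) : ℝ :=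
  deriv (fun u' => phiMap G Ψ u' v) u
    + phiMap G Ψ u v * deriv (fun v' => phiMap G Ψ u v') v


/-!
`Ψ₂` is constant along the curves `u ↦ Φ(u, t)`, whose slope `dv/du = u G(t)` is exactly `φ`;
so `Ψ₂` solves the transport equation `B_φ(Ψ₂) = 0`. As `B_φ` is a derivation with `B_φ(u) = 1`,
`B_φ(φ) = B_φ(u G(Ψ₂)) = G(Ψ₂) + u G'(Ψ₂) B_φ(Ψ₂) = G(Ψ₂)` and `B_φ(G(Ψ₂)) = G'(Ψ₂) B_φ(Ψ₂) = 0`.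
The partial derivatives of `Ψ₂` come from the inverse function theorem: the Jacobian of `Φ` is
a shear whose diagonal entry `1 + (y²/2) G'(t)` is at least `1`.
-/

open ContinuousLinearMap

section Partials

variable {𝕜 F : Type*} [NontriviallyNormedField 𝕜] [NormedAddCommGroup F] [NormedSpace 𝕜 F]
  {f : 𝕜 × 𝕜 → F} {L : 𝕜 × 𝕜 →L[𝕜] F} {u v : 𝕜}

theorem HasFDerivAt.hasDerivAt_partial_fst (hf : HasFDerivAt f L (u, v)) :
    HasDerivAt (fun u' => f (u', v)) (L (1, 0)) u :=
  hf.comp_hasDerivAt u ((hasDerivAt_id u).prodMk (hasDerivAt_const u v))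

theorem HasFDerivAt.hasDerivAt_partial_snd (hf : HasFDerivAt f L (u, v)) :
    HasDerivAt (fun v' => f (u, v')) (L (0, 1)) v :=
  hf.comp_hasDerivAt v ((hasDerivAt_const v u).prodMk (hasDerivAt_id v))

end Partials

section BurgersOperator

variable {𝕜 : Type*} [NontriviallyNormedField 𝕜] {φ f : 𝕜 → 𝕜 → 𝕜} {u v : 𝕜}

/-- The paper's `B_φ(f)`. -/
noncomputable def burgersOp (φ f : 𝕜 → 𝕜 → 𝕜) (u v : 𝕜) : 𝕜 :=
  deriv (fun u' => f u' v) u + φ u v * deriv (fun v' => f u v') v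

theorem burgersOp_eq_of_hasFDerivAt {L : 𝕜 × 𝕜 →L[𝕜] 𝕜}
    (hf : HasFDerivAt (Function.uncurry f) L (u, v)) :
    burgersOp φ f u v = L (1, 0) + φ u v * L (0, 1) := by
  have hu : HasDerivAt (fun u' => f u' v) (L (1, 0)) u := hf.hasDerivAt_partial_fst
  have hv : HasDerivAt (fun v' => f u v') (L (0, 1)) v := hf.hasDerivAt_partial_snd
  rw [burgersOp, hu.deriv, hv.deriv]

theorem burgersOp_comp {g : 𝕜 → 𝕜} (hg : DifferentiableAt 𝕜 g (f u v))
    (hf : DifferentiableAt 𝕜 (Function.uncurry f) (u, v)) :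
    burgersOp φ (fun u v => g (f u v)) u v = deriv g (f u v) * burgersOp φ f u v := by
  have hgf : HasFDerivAt (Function.uncurry fun u v => g (f u v))
      ((fderiv 𝕜 g (f u v)).comp (fderiv 𝕜 (Function.uncurry f) (u, v))) (u, v) :=
    hg.hasFDerivAt.comp (u, v) hf.hasFDerivAt
  rw [burgersOp_eq_of_hasFDerivAt hgf, burgersOp_eq_of_hasFDerivAt hf.hasFDerivAt]
  simp only [comp_apply, fderiv_eq_smul_deriv, smul_eq_mul]
  ring

theorem burgersOp_id_mul (hf : DifferentiableAt 𝕜 (Function.uncurry f) (u, v)) :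
    burgersOp φ (fun u v => u * f u v) u v = f u v + u * burgersOp φ f u v := by
  have hmul : HasFDerivAt (Function.uncurry fun u v => u * f u v)
      (u • fderiv 𝕜 (Function.uncurry f) (u, v) + f u v • fst 𝕜 𝕜 𝕜) (u, v) :=
    hasFDerivAt_fst.mul hf.hasFDerivAt
  rw [burgersOp_eq_of_hasFDerivAt hmul, burgersOp_eq_of_hasFDerivAt hf.hasFDerivAt]
  simp only [add_apply, smul_apply, coe_fst', smul_eq_mul]
  ring

end BurgersOperator

section Shear

variable {𝕜 : Type*} [NontriviallyNormedField 𝕜]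

def shearEquiv (a b : 𝕜) (hb : b ≠ 0) : (𝕜 × 𝕜) ≃L[𝕜] 𝕜 × 𝕜 :=
  ContinuousLinearEquiv.equivOfInverse
    ((fst 𝕜 𝕜 𝕜).prod (a • fst 𝕜 𝕜 𝕜 + b • snd 𝕜 𝕜 𝕜))
    ((fst 𝕜 𝕜 𝕜).prod ((-(a / b)) • fst 𝕜 𝕜 𝕜 + b⁻¹ • snd 𝕜 𝕜 𝕜))
    (fun x => by ext <;> simp; field_simp; ring)
    (fun x => by ext <;> simp; field_simp; ring)

theorem HasStrictFDerivAt.leftInverse_of_shear [CompleteSpace 𝕜] {h : 𝕜 × 𝕜 → 𝕜}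
    {Ψ : 𝕜 × 𝕜 → 𝕜 × 𝕜} {a b : 𝕜} (hb : b ≠ 0) {x : 𝕜 × 𝕜}
    (hh : HasStrictFDerivAt h (a • fst 𝕜 𝕜 𝕜 + b • snd 𝕜 𝕜 𝕜) (Ψ x))
    (hΨl : Function.LeftInverse Ψ fun q => (q.1, h q)) (hΨx : ((Ψ x).1, h (Ψ x)) = x) :
    HasStrictFDerivAt Ψ ((fst 𝕜 𝕜 𝕜).prod ((-(a / b)) • fst 𝕜 𝕜 𝕜 + b⁻¹ • snd 𝕜 𝕜 𝕜)) x := by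
  have hf : HasStrictFDerivAt (fun q => (q.1, h q)) (shearEquiv a b hb : 𝕜 × 𝕜 →L[𝕜] 𝕜 × 𝕜)
      (Ψ x) :=
    hasStrictFDerivAt_fst.prodMk hh
  have hΨ := hf.to_local_left_inverse (.of_forall hΨl)
  rwa [hΨx] at hΨ

end Shear

section Strip

variable {G : ℝ → ℝ} {Ψ : ℝ × ℝ → ℝ × ℝ}

theorem hasStrictFDerivAt_phiMap_snd {g' t : ℝ} (hG : HasStrictDerivAt G g' t) (y : ℝ) :
    HasStrictFDerivAt (fun q : ℝ × ℝ => (PhiMap G q).2)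
      ((y * G t) • fst ℝ ℝ ℝ + (1 + y ^ 2 / 2 * g') • snd ℝ ℝ ℝ) (y, t) := by
  have hsq : HasStrictFDerivAt (fun q : ℝ × ℝ => q.1 ^ 2 / 2) (y • fst ℝ ℝ ℝ) (y, t) := by
    refine (((hasStrictDerivAt_pow 2 y).div_const 2).comp_hasStrictFDerivAt (y, t)
      (hasStrictFDerivAt_fst (𝕜 := ℝ) (p := (y, t)))).congr_fderiv ?_
    ext <;> simp
  have hsum : HasStrictFDerivAt (fun q : ℝ × ℝ => q.2 + q.1 ^ 2 / 2 * G q.2) _ (y, t) :=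
    hasStrictFDerivAt_snd.add (hsq.mul (hG.comp_hasStrictFDerivAt (y, t) hasStrictFDerivAt_snd))
  refine hsum.congr_fderiv ?_
  ext <;> simp [mul_comm]

theorem hasStrictFDerivAt_inverse_phiMap (hG : ContDiff ℝ 1 G) (hG' : ∀ t, 0 ≤ deriv G t)
    (hΨl : Function.LeftInverse Ψ (PhiMap G)) (hΨr : Function.RightInverse Ψ (PhiMap G))
    (u v : ℝ) :
    HasStrictFDerivAt Ψ ((fst ℝ ℝ ℝ).prod
      ((-(u * G (Ψ (u, v)).2 / (1 + u ^ 2 / 2 * deriv G (Ψ (u, v)).2))) • fst ℝ ℝ ℝ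
        + (1 + u ^ 2 / 2 * deriv G (Ψ (u, v)).2)⁻¹ • snd ℝ ℝ ℝ)) (u, v) := by
  have hΨx : PhiMap G (Ψ (u, v)) = (u, v) := hΨr (u, v)
  have hp : Ψ (u, v) = (u, (Ψ (u, v)).2) := Prod.ext (congrArg Prod.fst hΨx :) rfl
  have hd : 1 + u ^ 2 / 2 * deriv G (Ψ (u, v)).2 ≠ 0 :=
    (add_pos_of_pos_of_nonneg one_pos (mul_nonneg (by positivity) (hG' _))).ne'
  have hh := hasStrictFDerivAt_phiMap_snd
    ((hG.contDiffAt (x := (Ψ (u, v)).2)).hasStrictDerivAt one_ne_zero) u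
  rw [← hp] at hh
  exact HasStrictFDerivAt.leftInverse_of_shear hd hh hΨl hΨx

theorem burgersOp_phiMap_inverse_snd_eq_zero (hG : ContDiff ℝ 1 G) (hG' : ∀ t, 0 ≤ deriv G t)
    (hΨl : Function.LeftInverse Ψ (PhiMap G)) (hΨr : Function.RightInverse Ψ (PhiMap G))
    (u v : ℝ) :
    burgersOp (phiMap G Ψ) (fun u v => (Ψ (u, v)).2) u v = 0 := by
  rw [burgersOp_eq_of_hasFDerivAt
    (hasStrictFDerivAt_inverse_phiMap hG hG' hΨl hΨr u v).hasFDerivAt.snd]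
  simp [phiMap, div_eq_mul_inv]

end Strip

/-- With `Ψ` the inverse of `Φ` and `φ(u,v) = u·G(Ψ₂(u,v))`, at every point
`(u,v)`: (i) `φ_u + φ·φ_v = G(Ψ₂(u,v))`, and (ii) `B_φ(B_φ(φ)) = 0`. -/
theorem stmt3 (G : ℝ → ℝ) (hG : ContDiff ℝ 2 G) (hG' : ∀ t : ℝ, 0 ≤ deriv G t)
    (Ψ : ℝ × ℝ → ℝ × ℝ)
    (hΨl : Function.LeftInverse Ψ (PhiMap G))
    (hΨr : Function.RightInverse Ψ (PhiMap G)) :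
    ∀ u v : ℝ,
      burgers G Ψ u v = G ((Ψ (u, v)).2) ∧
      deriv (fun u' => burgers G Ψ u' v) u
          + phiMap G Ψ u v * deriv (fun v' => burgers G Ψ u v') v = 0 := by
  have hG1 : ContDiff ℝ 1 G := hG.of_le (by norm_num)
  set ψ : ℝ → ℝ → ℝ := fun u v => (Ψ (u, v)).2
  have hψ : ∀ u v, DifferentiableAt ℝ (Function.uncurry ψ) (u, v) := fun u v =>
    (hasStrictFDerivAt_inverse_phiMap hG1 hG' hΨl hΨr u v).differentiableAt.snd
  have hGψ : ∀ u v, DifferentiableAt ℝ G (ψ u v) := fun u v =>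
    hG1.differentiable one_ne_zero _
  have htransport : ∀ u v, burgersOp (phiMap G Ψ) ψ u v = 0 :=
    burgersOp_phiMap_inverse_snd_eq_zero hG1 hG' hΨl hΨr
  have hburgers : burgers G Ψ = fun u v => G (ψ u v) := by
    funext u v
    calc burgers G Ψ u v = burgersOp (phiMap G Ψ) (fun u v => u * G (ψ u v)) u v := rfl
      _ = G (ψ u v) + u * (deriv G (ψ u v) * burgersOp (phiMap G Ψ) ψ u v) := by
        rw [burgersOp_id_mul ((hGψ u v).comp (u, v) (hψ u v)), burgersOp_comp (hGψ u v) (hψ u v)]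
      _ = G (ψ u v) := by rw [htransport, mul_zero, mul_zero, add_zero]
  intro u v
  refine ⟨congrFun₂ hburgers u v, ?_⟩
  change burgersOp (phiMap G Ψ) (burgers G Ψ) u v = 0
  rw [hburgers, burgersOp_comp (hGψ u v) (hψ u v), htransport, mul_zero]
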